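/- For every positive integer r and every nonnegative integer m, there exist integers b_{m,k}^{(r)} for m ≤ k ≤ rm such that C(k,m) divides b_{m,k}^{(r)} for each k, and for every nonnegative integer ℓ one has C(ℓ+m, 2m)^r · C(2m, m) = ∑_{k=m}^{rm} b_{m,k}^{(r)} · C(ℓ+k, 2k) · C(2k, k). -/

import Mathlib

/-!
Write `G(ℓ, j) = C(ℓ+j, 2j)·C(2j, j)` and `e_j(ℓ) = C(j, m)·G(ℓ, j)`. The key identity is
`C(ℓ+m, 2m)·e_k = C(k+m, 2m)·∑_{i=0}^{m} C(m, i)·e_{k+i}`, so multiplication by `C(ℓ+m, 2m)` maps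
the `ℤ`-span of `e_m, …, e_N` into the span of `e_m, …, e_{N+m}`. As `C(ℓ+m, 2m)·C(2m, m) = e_m`,
induction on `r` puts `C(ℓ+m, 2m)^r·C(2m, m)` into the span of `e_m, …, e_{rm}`, and coefficients
`c_k` there give `b_k = c_k·C(k, m)`.

The key identity holds because, as sequences in `m`, both sides satisfy the same first-order
recurrence. For the sum this comes from the contiguous relation
`(j+1)²·G(ℓ, j+1) = (ℓ-j)(ℓ+j+1)·G(ℓ, j)`, after which the coefficients telescope.
-/

open Finset

section Binomial

variable {R : Type*} [CommRing R]

theorem cast_choose_succ_right_eq (n k : ℕ) :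
    (n.choose (k + 1) : R) * (k + 1) = n.choose k * (n - k) := by
  rcases le_or_gt k n with h | h
  · have := congrArg (Nat.cast : ℕ → R) (Nat.choose_succ_right_eq n k)
    push_cast [Nat.cast_sub h] at this
    exact this
  · simp [Nat.choose_eq_zero_of_lt h, Nat.choose_eq_zero_of_lt (Nat.lt_succ_of_lt h)]

theorem cast_choose_mul_succ_eq (n k : ℕ) :
    (n.choose k : R) * (n + 1) = (n + 1).choose k * (n + 1 - k) := by
  have h₁ := congrArg (Nat.cast : ℕ → R) (Nat.add_one_mul_choose_eq n k)
  have h₂ := cast_choose_succ_right_eq (R := R) (n + 1) k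
  push_cast at h₁ h₂
  linear_combination h₁ + h₂

theorem cast_choose_succ_add_two (n a : ℕ) :
    ((a : R) + 1) * (a + 2) * (n + 1).choose (a + 2) = (n + 1) * (n - a) * n.choose a := by
  have h₁ := congrArg (Nat.cast : ℕ → R) (Nat.add_one_mul_choose_eq n (a + 1))
  have h₂ := cast_choose_succ_right_eq (R := R) n a
  push_cast at h₁
  linear_combination (-(a : R) - 1) * h₁ + (n + 1) * h₂

theorem cast_choose_add_two_mul_succ (ℓ m : ℕ) :
    (2 * (m : R) + 1) * (2 * m + 2) * (ℓ + (m + 1)).choose (2 * (m + 1)) =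
      (ℓ - m) * (ℓ + m + 1) * (ℓ + m).choose (2 * m) := by
  have h := cast_choose_succ_add_two (R := R) (ℓ + m) (2 * m)
  rw [show ℓ + m + 1 = ℓ + (m + 1) by ring, show 2 * m + 2 = 2 * (m + 1) by ring] at h
  push_cast at h
  linear_combination h

theorem cast_succ_sq_mul_centralBinom_succ (j : ℕ) :
    ((j : R) + 1) ^ 2 * (2 * (j + 1)).choose (j + 1) =
      (2 * j + 1) * (2 * j + 2) * (2 * j).choose j := by
  have h := congrArg (Nat.cast : ℕ → R) (Nat.succ_mul_centralBinom_succ j)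
  simp only [Nat.centralBinom_eq_two_mul_choose] at h
  push_cast at h
  linear_combination ((j : R) + 1) * h

theorem cast_choose_mul_choose_succ_succ (m k i : ℕ) :
    ((m : R) + 1) * (k + m + 1) * (k + i + 1).choose (m + 1) * (m + 1).choose (i + 1) =
      ((k : R) + i + 1) ^ 2 * (k + i).choose m * m.choose i +
        (((k : R) + i + 1) * (k + i + 2) - m * (m + 1)) * (k + i + 1).choose m *
          m.choose (i + 1) := by
  have ha := cast_choose_succ_right_eq (R := R) (k + i + 1) m
  have hb := congrArg (Nat.cast : ℕ → R) (Nat.choose_succ_succ m i)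
  have hc := cast_choose_mul_succ_eq (R := R) (k + i) m
  have hd := cast_choose_succ_right_eq (R := R) m i
  push_cast at ha hb hc hd ⊢
  linear_combination ((k : R) + m + 1) * ((m + 1).choose (i + 1) : R) * ha +
    ((k : R) + m + 1) * ((k : R) + i + 1 - m) * ((k + i + 1).choose m : R) * hb +
    -((k : R) + i + 1) * (m.choose i : R) * hc -
    (((k : R) + i + 1) - m) * ((k + i + 1).choose m : R) * hd

end Binomial

def schmidtTerm (ℓ j : ℕ) : ℤ := ((ℓ + j).choose (2 * j) : ℤ) * ((2 * j).choose j : ℤ)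

theorem succ_sq_mul_schmidtTerm_succ (ℓ j : ℕ) :
    ((j : ℤ) + 1) ^ 2 * schmidtTerm ℓ (j + 1) = (ℓ - j) * (ℓ + j + 1) * schmidtTerm ℓ j := by
  have hℓ := cast_choose_add_two_mul_succ (R := ℤ) ℓ j
  have hj := cast_succ_sq_mul_centralBinom_succ (R := ℤ) j
  unfold schmidtTerm
  linear_combination ((ℓ + (j + 1)).choose (2 * (j + 1)) : ℤ) * hj + ((2 * j).choose j : ℤ) * hℓ

theorem sum_range_add_two_eq_of_shift {M : Type*} [AddCommMonoid M] (f g h : ℕ → M) (n : ℕ)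
    (hf : ∀ i, f (i + 1) = g i + h (i + 1)) (hf₀ : f 0 = h 0) (hn : h (n + 1) = 0) :
    ∑ i ∈ range (n + 2), f i = ∑ i ∈ range (n + 1), (g i + h i) := by
  rw [sum_range_succ', sum_congr rfl fun i _ => hf i, sum_add_distrib, hf₀, add_assoc,
    ← sum_range_succ' h, sum_range_succ h, hn, add_zero, sum_add_distrib]

def schmidtSum (k m ℓ : ℕ) : ℤ :=
  ∑ i ∈ range (m + 1), (m.choose i : ℤ) * ((k + i).choose m * schmidtTerm ℓ (k + i))

theorem schmidtSum_succ (k m ℓ : ℕ) :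
    ((m : ℤ) + 1) * (k + m + 1) * schmidtSum k (m + 1) ℓ =
      (ℓ - m) * (ℓ + m + 1) * schmidtSum k m ℓ := by
  -- `(ℓ-m)(ℓ+m+1) = (ℓ-n)(ℓ+n+1) + n(n+1) - m(m+1)` with `n = k+i` splits each term in two
  have telescoped := sum_range_add_two_eq_of_shift
    (fun i => ((m : ℤ) + 1) * (k + m + 1) *
      ((m + 1).choose i * ((k + i).choose (m + 1) * schmidtTerm ℓ (k + i))))
    (fun i => (m.choose i : ℤ) * (k + i).choose m * ((k : ℤ) + i + 1) ^ 2 *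
      schmidtTerm ℓ (k + i + 1))
    (fun i => (m.choose i : ℤ) * (k + i).choose m * (((k : ℤ) + i) * (k + i + 1) - m * (m + 1)) *
      schmidtTerm ℓ (k + i)) m
    (fun i => by
      rw [← add_assoc]
      push_cast
      linear_combination
        schmidtTerm ℓ (k + i + 1) * cast_choose_mul_choose_succ_succ (R := ℤ) m k i)
    (by
      simp only [Nat.choose_zero_right, add_zero]
      push_cast
      linear_combination
        schmidtTerm ℓ k * ((k : ℤ) + m + 1) * cast_choose_succ_right_eq (R := ℤ) k m)
    (by simp)
  rw [schmidtSum, schmidtSum, mul_sum, telescoped, mul_sum]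
  refine sum_congr rfl fun i _ => ?_
  have h := succ_sq_mul_schmidtTerm_succ ℓ (k + i)
  push_cast at h
  linear_combination ((m.choose i : ℤ) * (k + i).choose m) * h

theorem eq_of_same_recurrence {M₀ : Type*} [MonoidWithZero M₀] [IsLeftCancelMulZero M₀]
    {X Y : ℕ → M₀} (a c : ℕ → M₀) (ha : ∀ m, a m ≠ 0) (hX : ∀ m, a m * X (m + 1) = c m * X m)
    (hY : ∀ m, a m * Y (m + 1) = c m * Y m) (h₀ : X 0 = Y 0) : X = Y := by
  funext m
  induction m with
  | zero => exact h₀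
  | succ m ih => exact mul_left_cancel₀ (ha m) (by rw [hX, hY, ih])

theorem choose_mul_schmidtSum (k m ℓ : ℕ) :
    ((k + m).choose (2 * m) : ℤ) * schmidtSum k m ℓ =
      (k.choose m : ℤ) * (ℓ + m).choose (2 * m) * schmidtTerm ℓ k := by
  refine congrFun (eq_of_same_recurrence
    (X := fun m => ((k + m).choose (2 * m) : ℤ) * schmidtSum k m ℓ)
    (Y := fun m => (k.choose m : ℤ) * (ℓ + m).choose (2 * m) * schmidtTerm ℓ k)
    (fun m => ((m : ℤ) + 1) * ((2 * m + 1) * (2 * m + 2)))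
    (fun m => ((k : ℤ) - m) * (ℓ - m) * (ℓ + m + 1)) (fun m => by positivity) (fun m => ?_)
    (fun m => ?_) (by simp [schmidtSum])) m
  · linear_combination
      ((m : ℤ) + 1) * schmidtSum k (m + 1) ℓ * cast_choose_add_two_mul_succ (R := ℤ) k m +
        ((k : ℤ) - m) * ((k + m).choose (2 * m) : ℤ) * schmidtSum_succ k m ℓ
  · linear_combination ((2 * (m : ℤ) + 1) * (2 * m + 2) * ((ℓ + (m + 1)).choose (2 * (m + 1))) *
        schmidtTerm ℓ k) * cast_choose_succ_right_eq (R := ℤ) k m +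
      ((k : ℤ) - m) * (k.choose m : ℤ) * schmidtTerm ℓ k * cast_choose_add_two_mul_succ (R := ℤ) ℓ m

def schmidtVec (m j : ℕ) : ℕ → ℤ := fun ℓ => (j.choose m : ℤ) * schmidtTerm ℓ j

def schmidtSpan (m N : ℕ) : Submodule ℤ (ℕ → ℤ) :=
  Submodule.span ℤ (schmidtVec m '' ↑(Icc m N))

theorem schmidtVec_mem_schmidtSpan {m N j : ℕ} (h₁ : m ≤ j) (h₂ : j ≤ N) :
    schmidtVec m j ∈ schmidtSpan m N :=
  Submodule.subset_span ⟨j, mem_Icc.2 ⟨h₁, h₂⟩, rfl⟩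

theorem choose_mul_schmidtVec (m k : ℕ) :
    (fun ℓ => ((ℓ + m).choose (2 * m) : ℤ)) * schmidtVec m k =
      ((k + m).choose (2 * m) : ℤ) •
        ∑ i ∈ range (m + 1), (m.choose i : ℤ) • schmidtVec m (k + i) := by
  funext ℓ
  simp only [Pi.mul_apply, Pi.smul_apply, Finset.sum_apply, smul_eq_mul, schmidtVec]
  rw [← schmidtSum, choose_mul_schmidtSum]
  ring

theorem mul_mem_schmidtSpan {m N : ℕ} {f : ℕ → ℤ} (hf : f ∈ schmidtSpan m N) :
    (fun ℓ => ((ℓ + m).choose (2 * m) : ℤ)) * f ∈ schmidtSpan m (N + m) := by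
  suffices schmidtSpan m N ≤
      (schmidtSpan m (N + m)).comap (LinearMap.mulLeft ℤ fun ℓ => ((ℓ + m).choose (2 * m) : ℤ)) from
    this hf
  refine Submodule.span_le.2 ?_
  rintro _ ⟨k, hk, rfl⟩
  rw [coe_Icc, Set.mem_Icc] at hk
  rw [SetLike.mem_coe, Submodule.mem_comap, LinearMap.mulLeft_apply, choose_mul_schmidtVec]
  refine Submodule.smul_mem _ _ (Submodule.sum_mem _ fun i hi => Submodule.smul_mem _ _ ?_)
  exact schmidtVec_mem_schmidtSpan (by omega) (by simp at hi; omega)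

theorem choose_pow_mul_centralBinom_mem_schmidtSpan (m : ℕ) {r : ℕ} (hr : 0 < r) :
    (fun ℓ => ((ℓ + m).choose (2 * m) : ℤ) ^ r * (2 * m).choose m) ∈ schmidtSpan m (r * m) := by
  induction r, hr using Nat.le_induction with
  | base =>
    have h : schmidtVec m m = fun ℓ => ((ℓ + m).choose (2 * m) : ℤ) ^ 1 * (2 * m).choose m := by
      funext ℓ
      simp [schmidtVec, schmidtTerm]
    exact h ▸ schmidtVec_mem_schmidtSpan le_rfl (one_mul m).ge
  | succ r _ ih =>
    convert mul_mem_schmidtSpan ih using 1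
    · rw [add_one_mul]
    · funext ℓ
      simp only [Pi.mul_apply]
      ring

/-- For every positive integer `r` and nonnegative integer `m`, there exist integers
`b k` for `m ≤ k ≤ r·m`, each divisible by `C(k,m)`, such that for every `ℓ`,
`C(ℓ+m,2m)^r · C(2m,m) = ∑_{k=m}^{rm} b k · C(ℓ+k,2k) · C(2k,k)`. -/
theorem schmidt_lemma_one (r m : ℕ) (hr : 0 < r) :
    ∃ b : ℕ → ℤ,
      (∀ k, m ≤ k → k ≤ r * m → ((k.choose m : ℤ)) ∣ b k) ∧
      ∀ ℓ : ℕ,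
        (((ℓ + m).choose (2 * m) : ℤ)) ^ r * ((2 * m).choose m : ℤ) =
          ∑ k ∈ Finset.Icc m (r * m),
            b k * ((ℓ + k).choose (2 * k) : ℤ) * ((2 * k).choose k : ℤ) := by
  obtain ⟨c, hc⟩ := (Submodule.mem_span_image_finset_iff_exists_fun' ℤ).1
    (choose_pow_mul_centralBinom_mem_schmidtSpan m hr)
  refine ⟨fun k => c k * k.choose m, fun k _ _ => dvd_mul_left _ _, fun ℓ => ?_⟩
  rw [← congrFun hc ℓ, Finset.sum_apply]
  refine sum_congr rfl fun k _ => ?_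
  simp only [Pi.smul_apply, smul_eq_mul, schmidtVec, schmidtTerm]
  ring
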